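/- arXiv:2007.02647 — 3 statements merged into one kernel-verified Lean document; each statement's English description precedes it below -/
import Mathlib

section
/- Let Γ and G be groups, let ρ : Γ → G be a quasi-homomorphism and let φ : Γ → G be a witness for ρ. Then for all x, y ∈ Γ, the element φ(x·y)⁻¹ · φ(x) · φ(y) lies in the centralizer in G of the image ρ(Γ), i.e. it commutes with ρ(z) for every z ∈ Γ. -/
/-!
Writing the witness identity as `ρ (x * y) = ρ x * φ x * ρ y * (φ x)⁻¹` and expanding `ρ (x * y * z)`
along both bracketings shows that conjugation by `φ (x * y)` and by `φ x * φ y` agree on `ρ z`;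
two elements inducing the same conjugation on a set differ by an element of its centralizer.
-/

theorem Subgroup.inv_mul_mem_centralizer_of_conj_eq {G : Type*} [Group G] {a b : G} {s : Set G}
    (h : ∀ g ∈ s, MulAut.conj a g = MulAut.conj b g) : a⁻¹ * b ∈ Subgroup.centralizer s := by
  rw [Subgroup.mem_centralizer_iff]
  intro g hg
  have hab : a * g * a⁻¹ = b * g * b⁻¹ := h g hg
  calc g * (a⁻¹ * b) = a⁻¹ * (a * g * a⁻¹) * b := by group
    _ = a⁻¹ * (b * g * b⁻¹) * b := by rw [hab]
    _ = a⁻¹ * b * g := by group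

def IsQuasiHomWitness {Γ G : Type*} [Group Γ] [Group G] (ρ φ : Γ → G) : Prop :=
  ∀ x y : Γ, (ρ x)⁻¹ * ρ (x * y) = φ x * ρ y * (φ x)⁻¹

namespace IsQuasiHomWitness

variable {Γ G : Type*} [Group Γ] [Group G] {ρ φ : Γ → G}

theorem map_mul (h : IsQuasiHomWitness ρ φ) (x y : Γ) :
    ρ (x * y) = ρ x * MulAut.conj (φ x) (ρ y) := by
  rw [MulAut.conj_apply, ← h x y, mul_inv_cancel_left]

theorem conj_map_mul (h : IsQuasiHomWitness ρ φ) (x y z : Γ) :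
    MulAut.conj (φ (x * y)) (ρ z) = MulAut.conj (φ x * φ y) (ρ z) := by
  apply mul_left_cancel (a := ρ (x * y))
  calc ρ (x * y) * MulAut.conj (φ (x * y)) (ρ z) = ρ (x * y * z) := (h.map_mul _ _).symm
    _ = ρ (x * (y * z)) := by rw [mul_assoc]
    _ = ρ x * MulAut.conj (φ x) (ρ y * MulAut.conj (φ y) (ρ z)) := by
      rw [h.map_mul, h.map_mul]
    _ = ρ (x * y) * MulAut.conj (φ x * φ y) (ρ z) := by
      rw [h.map_mul, _root_.map_mul, _root_.map_mul, MulAut.mul_apply, mul_assoc]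

end IsQuasiHomWitness

/-- If `ρ : Γ → G` is a quasi-homomorphism with witness `φ`, then for all `x, y ∈ Γ` the
element `φ(x·y)⁻¹ · φ(x) · φ(y)` centralizes the image of `ρ`. -/
theorem quasiHom_witness_defect_mem_centralizer {Γ G : Type*} [Group Γ] [Group G]
    (ρ φ : Γ → G)
    (hφ : ∀ x y : Γ, (ρ x)⁻¹ * ρ (x * y) = φ x * ρ y * (φ x)⁻¹) (x y : Γ) :
    (φ (x * y))⁻¹ * φ x * φ y ∈ Subgroup.centralizer (Set.range ρ) := by
  have hw : IsQuasiHomWitness ρ φ := hφ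
  rw [mul_assoc]
  apply Subgroup.inv_mul_mem_centralizer_of_conj_eq
  rintro _ ⟨z, rfl⟩
  exact hw.conj_map_mul x y z
end

section
/- Let Γ and G be groups, let σ : Γ → G be a group homomorphism, let φ : Γ → G be a group homomorphism whose image lies in the centralizer in G of σ(Γ), and let g ∈ G. Then the map ρ : Γ → G defined by ρ(x) = g⁻¹ · σ(x) · φ(x) · g · φ(x)⁻¹ is a quasi-homomorphism, with witness φ, i.e. ρ(x)⁻¹ · ρ(x·y) = φ(x) · ρ(y) · φ(x)⁻¹ for all x, y ∈ Γ. -/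
/-!
Since `φ(Γ)` centralizes `σ(Γ)`, the pointwise product `x ↦ σ x * φ x` is a homomorphism, and so is
its conjugate `ψ x = g⁻¹ * σ x * φ x * g`. Hence `ρ = ψ * φ⁻¹` pointwise, and for any two
homomorphisms `ψ, φ` the map `x ↦ ψ x * (φ x)⁻¹` is a quasi-homomorphism with witness `φ`:
`(ψ x φ(x)⁻¹)⁻¹ ψ(xy) φ(xy)⁻¹ = φ x (ψ y φ(y)⁻¹) φ(x)⁻¹`.
-/

def IsQuasiHomWith {Γ G : Type*} [Group Γ] [Group G] (ρ φ : Γ → G) : Prop :=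
  ∀ x y : Γ, (ρ x)⁻¹ * ρ (x * y) = φ x * ρ y * (φ x)⁻¹

theorem MonoidHom.isQuasiHomWith_mul_inv {Γ G : Type*} [Group Γ] [Group G] (ψ φ : Γ →* G) :
    IsQuasiHomWith (fun x => ψ x * (φ x)⁻¹) φ := by
  intro x y
  simp only [map_mul]
  group

/-- Let `σ, φ : Γ →* G` be group homomorphisms with the image of `φ` contained in the
centralizer of the image of `σ`, and let `g ∈ G`.  Then `ρ(x) = g⁻¹·σ(x)·φ(x)·g·φ(x)⁻¹`
is a quasi-homomorphism with witness `φ`. -/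
theorem conj_twist_isQuasiHom {Γ G : Type*} [Group Γ] [Group G] (σ φ : Γ →* G)
    (hcent : ∀ x : Γ, φ x ∈ Subgroup.centralizer (Set.range ⇑σ)) (g : G)
    (ρ : Γ → G) (hρ : ∀ x : Γ, ρ x = g⁻¹ * σ x * φ x * g * (φ x)⁻¹) :
    ∀ x y : Γ, (ρ x)⁻¹ * ρ (x * y) = φ x * ρ y * (φ x)⁻¹ := by
  have hcomm : ∀ m n : Γ, Commute (σ m) (φ n) := fun m n => hcent n (σ m) ⟨m, rfl⟩
  let σφ : Γ →* G := (σ.noncommCoprod φ hcomm).comp ((MonoidHom.id Γ).prod (MonoidHom.id Γ))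
  let ψ : Γ →* G := (MulAut.conj g⁻¹).toMonoidHom.comp σφ
  have hρψ : ρ = fun x => ψ x * (φ x)⁻¹ := by
    funext x
    simp [ψ, σφ, hρ, mul_assoc]
  exact hρψ ▸ ψ.isQuasiHomWith_mul_inv φ
end

section
/- Let Γ and G be groups and let ρ : Γ → G be a quasi-homomorphism with witness φ : Γ → G. Suppose in addition that (1) ρ(x⁻¹) = ρ(x)⁻¹ for all x ∈ Γ, and (2) ρ(x)⁻¹ · ρ(x·y) = ρ(y·x) · ρ(x)⁻¹ for all x, y ∈ Γ. Then for every x ∈ Γ the element φ(x)² lies in the centralizer in G of the image ρ(Γ), i.e. φ(x)² commutes with ρ(z) for all z ∈ Γ. -/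
/-!
Combining the quasi-homomorphism identity with the reflection identity, conjugation by `φ x`
acts on the image of `ρ` by `ρ y ↦ ρ (y * x) * (ρ x)⁻¹`. Applied twice this gives
`ρ y ↦ ρ (y * x * x) * (ρ x)⁻²`, and the inversion and reflection identities force
`ρ (y * x * x) = ρ y * ρ x * ρ x`, so conjugation by `φ x ^ 2` fixes every `ρ y`.
-/

namespace QuasiHom

variable {Γ G : Type*} [Group Γ] [Group G] {ρ φ : Γ → G}

theorem map_one_of_witness (hφ : ∀ x y : Γ, (ρ x)⁻¹ * ρ (x * y) = φ x * ρ y * (φ x)⁻¹) :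
    ρ 1 = 1 := by
  have h := hφ 1 1
  rwa [mul_one, inv_mul_cancel, eq_comm, mul_inv_eq_one, mul_eq_left] at h

theorem witness_conj_eq (hφ : ∀ x y : Γ, (ρ x)⁻¹ * ρ (x * y) = φ x * ρ y * (φ x)⁻¹)
    (hrefl : ∀ x y : Γ, (ρ x)⁻¹ * ρ (x * y) = ρ (y * x) * (ρ x)⁻¹) (x y : Γ) :
    φ x * ρ y * (φ x)⁻¹ = ρ (y * x) * (ρ x)⁻¹ :=
  (hφ x y).symm.trans (hrefl x y)

theorem map_mul_map_inv_mul (hinv : ∀ x : Γ, ρ x⁻¹ = (ρ x)⁻¹)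
    (hrefl : ∀ x y : Γ, (ρ x)⁻¹ * ρ (x * y) = ρ (y * x) * (ρ x)⁻¹) (x y : Γ) :
    ρ x * ρ (x⁻¹ * y) = ρ (y * x⁻¹) * ρ x := by
  simpa only [hinv, inv_inv] using hrefl x⁻¹ y

variable (hφ : ∀ x y : Γ, (ρ x)⁻¹ * ρ (x * y) = φ x * ρ y * (φ x)⁻¹)
  (hinv : ∀ x : Γ, ρ x⁻¹ = (ρ x)⁻¹)
  (hrefl : ∀ x y : Γ, (ρ x)⁻¹ * ρ (x * y) = ρ (y * x) * (ρ x)⁻¹)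
include hφ hinv hrefl

theorem map_mul_mul_inv (x u : Γ) : ρ (u * x) * (ρ x)⁻¹ = ρ x * ρ (x⁻¹ * u) :=
  calc ρ (u * x) * (ρ x)⁻¹ = φ x * ρ u * (φ x)⁻¹ := (witness_conj_eq hφ hrefl x u).symm
    _ = (φ x * ρ u⁻¹ * (φ x)⁻¹)⁻¹ := by rw [hinv]; group
    _ = (ρ (u⁻¹ * x) * (ρ x)⁻¹)⁻¹ := by rw [witness_conj_eq hφ hrefl]
    _ = ρ x * ρ (x⁻¹ * u) := by rw [mul_inv_rev, inv_inv, ← hinv, mul_inv_rev, inv_inv]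

theorem map_mul_mul_self (z x : Γ) : ρ (z * x * x) = ρ z * ρ x * ρ x := by
  have h := map_mul_mul_inv hφ hinv hrefl x (z * x)
  rw [map_mul_map_inv_mul hinv hrefl, mul_inv_cancel_right] at h
  exact mul_inv_eq_iff_eq_mul.mp h

theorem witness_conj_map_self_inv (x : Γ) : φ x * (ρ x)⁻¹ * (φ x)⁻¹ = (ρ x)⁻¹ := by
  rw [← hinv, witness_conj_eq hφ hrefl, inv_mul_cancel, map_one_of_witness hφ, one_mul, hinv]

theorem witness_sq_conj (x z : Γ) : φ x ^ 2 * ρ z * (φ x ^ 2)⁻¹ = ρ z :=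
  calc φ x ^ 2 * ρ z * (φ x ^ 2)⁻¹
      = φ x * (φ x * ρ z * (φ x)⁻¹) * (φ x)⁻¹ := by simp only [sq, mul_inv_rev, mul_assoc]
    _ = (φ x * ρ (z * x) * (φ x)⁻¹) * (φ x * (ρ x)⁻¹ * (φ x)⁻¹) := by
      rw [witness_conj_eq hφ hrefl]; group
    _ = ρ z := by
      rw [witness_conj_eq hφ hrefl, witness_conj_map_self_inv hφ hinv hrefl,
        map_mul_mul_self hφ hinv hrefl]
      group

end QuasiHom

/-- Let `ρ : Γ → G` be a quasi-homomorphism with witness `φ` satisfying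
(1) `ρ(x⁻¹) = ρ(x)⁻¹` and (2) `ρ(x)⁻¹·ρ(x·y) = ρ(y·x)·ρ(x)⁻¹` for all `x, y ∈ Γ`.
Then `φ(x)²` centralizes the image of `ρ` for every `x ∈ Γ`. -/
theorem quasiHom_witness_sq_mem_centralizer {Γ G : Type*} [Group Γ] [Group G] (ρ φ : Γ → G)
    (hφ : ∀ x y : Γ, (ρ x)⁻¹ * ρ (x * y) = φ x * ρ y * (φ x)⁻¹)
    (hinv : ∀ x : Γ, ρ x⁻¹ = (ρ x)⁻¹)
    (hrefl : ∀ x y : Γ, (ρ x)⁻¹ * ρ (x * y) = ρ (y * x) * (ρ x)⁻¹) (x : Γ) :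
    (φ x) ^ 2 ∈ Subgroup.centralizer (Set.range ρ) := by
  rw [Subgroup.mem_centralizer_iff]
  rintro _ ⟨z, rfl⟩
  exact (mul_inv_eq_iff_eq_mul.mp (QuasiHom.witness_sq_conj hφ hinv hrefl x z)).symm
end
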